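/- arXiv:1311.6034 — 2 statements merged into one kernel-verified Lean document; each statement's English description precedes it below -/
import Mathlib

section
/- Second equation of Lobachevsky's spherical right-triangle list: for linearly independent unit vectors A, B, C in a real inner product space such that the vertex angle at C is π/2, one has cos(∠(A,C)) · sin(vertex angle at A) = cos(vertex angle at B), i.e. cos b · sin A = cos B. -/
/-!
Write `a = ⟪B, C⟫`, `b = ⟪A, C⟫`, `c = ⟪A, B⟫` for the cosines of the sides. The spherical law of
cosines gives `cos A = (a - b c) / (sin b sin c)`, and a right angle at `C` is the spherical
Pythagorean theorem `c = a b`. Substituting, `cos A = a sin b / sin c` and `sin A = sin a / sin c`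
(this needs `sin b ≠ 0`), so `cos b sin A = b sin a / sin c`, which is the same expression for
`cos B` with the roles of `A` and `B` exchanged.
-/

open InnerProductGeometry RealInnerProductSpace Real

section

variable {E : Type*} [NormedAddCommGroup E] [InnerProductSpace ℝ E] {x y z : E}

noncomputable def vertexAngle (x y z : E) : ℝ :=
  angle (y - ⟪y, x⟫ • x) (z - ⟪z, x⟫ • x)

theorem inner_sub_inner_smul_sub_inner_smul (hx : ‖x‖ = 1) (y z : E) :
    ⟪y - ⟪y, x⟫ • x, z - ⟪z, x⟫ • x⟫ = ⟪y, z⟫ - ⟪y, x⟫ * ⟪z, x⟫ := by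
  have hxx : ⟪x, x⟫ = 1 := by rw [real_inner_self_eq_norm_sq, hx, one_pow]
  simp only [inner_sub_left, inner_sub_right, real_inner_smul_left, real_inner_smul_right, hxx,
    real_inner_comm x]
  ring

theorem norm_sub_inner_smul (hx : ‖x‖ = 1) (hy : ‖y‖ = 1) :
    ‖y - ⟪y, x⟫ • x‖ = √(1 - ⟪x, y⟫ ^ 2) := by
  rw [norm_eq_sqrt_real_inner, inner_sub_inner_smul_sub_inner_smul hx, real_inner_self_eq_norm_sq,
    hy, real_inner_comm y x]
  ring_nf

theorem sq_inner_lt_one_of_linearIndependent (hx : ‖x‖ = 1) (hy : ‖y‖ = 1)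
    (h : LinearIndependent ℝ ![x, y]) : ⟪x, y⟫ ^ 2 < 1 := by
  have hne : y - ⟪y, x⟫ • x ≠ 0 := fun h0 ↦ by
    have := LinearIndependent.pair_iff.mp h (-⟪y, x⟫) 1 (by rw [← h0]; module)
    exact one_ne_zero this.2
  have := norm_pos_iff.mpr hne
  rw [norm_sub_inner_smul hx hy, Real.sqrt_pos] at this
  linarith

/-- No nondegeneracy is needed: a vanishing projection has angle `π / 2`, and division by `0`
gives `0`. -/
theorem cos_vertexAngle (hx : ‖x‖ = 1) (hy : ‖y‖ = 1) (hz : ‖z‖ = 1) :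
    Real.cos (vertexAngle x y z) =
      (⟪y, z⟫ - ⟪x, y⟫ * ⟪x, z⟫) / (√(1 - ⟪x, y⟫ ^ 2) * √(1 - ⟪x, z⟫ ^ 2)) := by
  rw [vertexAngle, cos_angle, inner_sub_inner_smul_sub_inner_smul hx, norm_sub_inner_smul hx hy,
    norm_sub_inner_smul hx hz, real_inner_comm x y, real_inner_comm x z]

theorem vertexAngle_eq_pi_div_two_iff (hz : ‖z‖ = 1) :
    vertexAngle z x y = π / 2 ↔ ⟪x, y⟫ = ⟪x, z⟫ * ⟪y, z⟫ := by
  rw [vertexAngle, ← inner_eq_zero_iff_angle_eq_pi_div_two, inner_sub_inner_smul_sub_inner_smul hz,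
    sub_eq_zero]

theorem sq_inner_le_one (hx : ‖x‖ = 1) (hy : ‖y‖ = 1) : ⟪x, y⟫ ^ 2 ≤ 1 := by
  rw [sq_le_one_iff_abs_le_one]
  simpa [hx, hy] using abs_real_inner_le_norm x y

theorem cos_vertexAngle_of_right (hx : ‖x‖ = 1) (hy : ‖y‖ = 1) (hz : ‖z‖ = 1)
    (hright : vertexAngle z x y = π / 2) :
    Real.cos (vertexAngle x y z) = ⟪y, z⟫ * √(1 - ⟪x, z⟫ ^ 2) / √(1 - ⟪x, y⟫ ^ 2) := by
  have hnum : ⟪y, z⟫ - ⟪x, y⟫ * ⟪x, z⟫ = ⟪y, z⟫ * (1 - ⟪x, z⟫ ^ 2) := by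
    rw [(vertexAngle_eq_pi_div_two_iff hz).mp hright, real_inner_comm z x]
    ring
  rw [cos_vertexAngle hx hy hz, hnum, mul_div_mul_comm, Real.div_sqrt, div_mul_eq_mul_div]

theorem sin_vertexAngle_of_right (hx : ‖x‖ = 1) (hy : ‖y‖ = 1) (hz : ‖z‖ = 1)
    (hright : vertexAngle z x y = π / 2) (hxz : ⟪x, z⟫ ^ 2 < 1) :
    Real.sin (vertexAngle x y z) = √(1 - ⟪y, z⟫ ^ 2) / √(1 - ⟪x, y⟫ ^ 2) := by
  have hxy : ⟪x, y⟫ = ⟪x, z⟫ * ⟪y, z⟫ := (vertexAngle_eq_pi_div_two_iff hz).mp hright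
  have hyz := sq_inner_le_one hy hz
  have hxy_lt : ⟪x, y⟫ ^ 2 < 1 := by rw [hxy, mul_pow]; nlinarith
  have hsin_sq : 1 - (⟪y, z⟫ * √(1 - ⟪x, z⟫ ^ 2) / √(1 - ⟪x, y⟫ ^ 2)) ^ 2 =
      (1 - ⟪y, z⟫ ^ 2) / (1 - ⟪x, y⟫ ^ 2) := by
    rw [div_pow, mul_pow, Real.sq_sqrt (by linarith), Real.sq_sqrt (by linarith)]
    field_simp [(sub_pos.mpr hxy_lt).ne']
    rw [hxy]
    ring
  rw [Real.sin_eq_sqrt_one_sub_cos_sq (x := vertexAngle x y z) (angle_nonneg ..) (angle_le_pi ..),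
    cos_vertexAngle_of_right hx hy hz hright, hsin_sq, Real.sqrt_div (by linarith)]

end

/-- Second equation of Lobachevsky's spherical right-triangle list: for a spherical
triangle given by linearly independent unit vectors `A`, `B`, `C` with a right
vertex angle at `C`, `cos b * sin A = cos B`, i.e.
`cos ∠(A,C) * sin (vertex angle at A) = cos (vertex angle at B)`. -/
theorem spherical_cos_sin_right
    {E : Type*} [NormedAddCommGroup E] [InnerProductSpace ℝ E]
    (A B C : E) (hA : ‖A‖ = 1) (hB : ‖B‖ = 1) (hC : ‖C‖ = 1)
    (hli : LinearIndependent ℝ ![A, B, C])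
    (hright : angle (A - (inner ℝ A C : ℝ) • C) (B - (inner ℝ B C : ℝ) • C) = Real.pi / 2) :
    Real.cos (angle A C) *
      Real.sin (angle (B - (inner ℝ B A : ℝ) • A) (C - (inner ℝ C A : ℝ) • A)) =
      Real.cos (angle (A - (inner ℝ A B : ℝ) • B) (C - (inner ℝ C B : ℝ) • B)) := by
  change Real.cos (angle A C) * Real.sin (vertexAngle A B C) = Real.cos (vertexAngle B A C)
  have hright' : vertexAngle C B A = π / 2 := by rwa [vertexAngle, angle_comm]
  have hAC : ⟪A, C⟫ ^ 2 < 1 :=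
    sq_inner_lt_one_of_linearIndependent hA hC <| by
      convert hli.comp ![0, 2] (by decide) using 1
      ext i; fin_cases i <;> rfl
  rw [cos_angle, hA, hC, sin_vertexAngle_of_right hA hB hC hright hAC,
    cos_vertexAngle_of_right hB hA hC hright', real_inner_comm B A]
  ring
end

section
/- Dual spherical law of cosines (fourth equation of Lobachevsky's general spherical list): for linearly independent unit vectors A, B, C in a real inner product space, cos(∠(B,C)) · sin(vertex angle at B) · sin(vertex angle at C) = cos(vertex angle at B) · cos(vertex angle at C) + cos(vertex angle at A), i.e. cos a · sin B · sin C = cos B · cos C + cos A. -/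
/-!
Write `a, b, c` for the sides `∠(v,w), ∠(u,w), ∠(u,v)` and `α, β, γ` for the vertex angles at
`u, v, w`. Projecting to the orthogonal complement of a vertex gives the spherical law of cosines
`cos γ sin a sin b = cos c - cos a cos b` and its rotations, and squaring the sine version shows
that `sin β sin c sin a` and `sin γ sin a sin b` are both the nonnegative square root of the Gram
determinant `1 - cos² a - cos² b - cos² c + 2 cos a cos b cos c`. Once multiplied by
`sin² a sin b sin c`, which linear independence makes nonzero, the claim becomes a polynomial
identity in `cos a, cos b, cos c`.
-/

open InnerProductGeometry

theorem LinearIndependent.pair {ι R M : Type*} [Semiring R] [AddCommMonoid M] [Module R M]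
    {v : ι → M} (h : LinearIndependent R v) {i j : ι} (hij : i ≠ j) :
    LinearIndependent R ![v i, v j] := by
  convert h.comp ![i, j] (injective_pair_iff_ne.mpr hij) using 1
  ext k; fin_cases k <;> rfl

namespace InnerProductGeometry

open Real

variable {E : Type*} [NormedAddCommGroup E] [InnerProductSpace ℝ E]

theorem sin_angle_ne_zero_of_linearIndependent {u v : E} (h : LinearIndependent ℝ ![u, v]) :
    sin (angle u v) ≠ 0 := by
  rw [Ne, sin_eq_zero_iff_angle_eq_zero_or_angle_eq_pi, angle_eq_zero_iff, angle_eq_pi_iff]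
  rintro (⟨hu, r, -, rfl⟩ | ⟨hu, r, -, rfl⟩) <;> exact (LinearIndependent.pair_iff' hu).mp h r rfl

/-- The vertex angle at `w` of the spherical triangle `u w v` (vertex in the middle, as for
`EuclideanGeometry.angle`). -/
noncomputable def sphericalAngle (u w v : E) : ℝ :=
  angle (u - (inner ℝ u w : ℝ) • w) (v - (inner ℝ v w : ℝ) • w)

theorem inner_sub_inner_smul_sub_inner_smul {w : E} (hw : ‖w‖ = 1) (u v : E) :
    inner ℝ (u - (inner ℝ u w : ℝ) • w) (v - (inner ℝ v w : ℝ) • w) =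
      inner ℝ u v - inner ℝ u w * inner ℝ v w := by
  simp only [inner_sub_left, inner_sub_right, real_inner_smul_left, real_inner_smul_right,
    real_inner_self_eq_norm_sq, hw, real_inner_comm w]
  ring

theorem norm_sub_inner_smul_eq_mul_sin_angle {w : E} (hw : ‖w‖ = 1) (u : E) :
    ‖u - (inner ℝ u w : ℝ) • w‖ = ‖u‖ * sin (angle u w) :=
  calc ‖u - (inner ℝ u w : ℝ) • w‖
      = √(inner ℝ u u * inner ℝ w w - inner ℝ u w * inner ℝ u w) := by
        rw [norm_eq_sqrt_real_inner, inner_sub_inner_smul_sub_inner_smul hw,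
          real_inner_self_eq_norm_sq w, hw, one_pow, mul_one]
    _ = sin (angle u w) * (‖u‖ * ‖w‖) := (sin_angle_mul_norm_mul_norm u w).symm
    _ = ‖u‖ * sin (angle u w) := by rw [hw]; ring

variable {u v w : E}

/-- The spherical law of cosines. -/
theorem cos_sphericalAngle_mul_sin_mul_sin (hu : ‖u‖ = 1) (hv : ‖v‖ = 1) (hw : ‖w‖ = 1) :
    cos (sphericalAngle u w v) * (sin (angle u w) * sin (angle v w)) =
      cos (angle u v) - cos (angle u w) * cos (angle v w) :=
  calc cos (sphericalAngle u w v) * (sin (angle u w) * sin (angle v w))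
      = cos (sphericalAngle u w v) *
          (‖u - (inner ℝ u w : ℝ) • w‖ * ‖v - (inner ℝ v w : ℝ) • w‖) := by
        rw [norm_sub_inner_smul_eq_mul_sin_angle hw, norm_sub_inner_smul_eq_mul_sin_angle hw, hu,
          hv, one_mul, one_mul]
    _ = inner ℝ u v - inner ℝ u w * inner ℝ v w :=
        (cos_angle_mul_norm_mul_norm _ _).trans (inner_sub_inner_smul_sub_inner_smul hw u v)
    _ = cos (angle u v) - cos (angle u w) * cos (angle v w) := by
        rw [inner_eq_cos_angle_of_norm_eq_one hu hv, inner_eq_cos_angle_of_norm_eq_one hu hw,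
          inner_eq_cos_angle_of_norm_eq_one hv hw]

theorem sq_sin_sphericalAngle_mul_sin_mul_sin (hu : ‖u‖ = 1) (hv : ‖v‖ = 1) (hw : ‖w‖ = 1) :
    (sin (sphericalAngle u w v) * (sin (angle u w) * sin (angle v w))) ^ 2 =
      1 - cos (angle u v) ^ 2 - cos (angle u w) ^ 2 - cos (angle v w) ^ 2 +
        2 * cos (angle u v) * cos (angle u w) * cos (angle v w) := by
  have hcos := cos_sphericalAngle_mul_sin_mul_sin hu hv hw
  set S := sin (angle u w) * sin (angle v w)
  linear_combination S ^ 2 * sin_sq_add_cos_sq (sphericalAngle u w v)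
    - (cos (sphericalAngle u w v) * S + cos (angle u v) - cos (angle u w) * cos (angle v w)) * hcos
    + sin (angle v w) ^ 2 * sin_sq_add_cos_sq (angle u w)
    + (1 - cos (angle u w) ^ 2) * sin_sq_add_cos_sq (angle v w)

/-- The spherical law of sines `sin γ sin b = sin β sin c`, multiplied by `sin a`. -/
theorem sin_sphericalAngle_mul_sin_mul_sin_comm (hu : ‖u‖ = 1) (hv : ‖v‖ = 1) (hw : ‖w‖ = 1) :
    sin (sphericalAngle u w v) * (sin (angle u w) * sin (angle v w)) =
      sin (sphericalAngle u v w) * (sin (angle u v) * sin (angle w v)) := by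
  refine (sq_eq_sq₀ ?_ ?_).mp ?_
  any_goals exact mul_nonneg (sin_angle_nonneg _ _) <|
    mul_nonneg (sin_angle_nonneg _ _) (sin_angle_nonneg _ _)
  rw [sq_sin_sphericalAngle_mul_sin_mul_sin hu hv hw,
    sq_sin_sphericalAngle_mul_sin_mul_sin hu hw hv, angle_comm w v]
  ring

theorem cos_angle_mul_sin_sphericalAngle_mul_sin_sphericalAngle (hu : ‖u‖ = 1) (hv : ‖v‖ = 1)
    (hw : ‖w‖ = 1) (huv : sin (angle u v) ≠ 0) (huw : sin (angle u w) ≠ 0)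
    (hvw : sin (angle v w) ≠ 0) :
    cos (angle v w) * sin (sphericalAngle u v w) * sin (sphericalAngle u w v) =
      cos (sphericalAngle u v w) * cos (sphericalAngle u w v) + cos (sphericalAngle v u w) := by
  have hcos_u := cos_sphericalAngle_mul_sin_mul_sin hv hw hu
  have hcos_v := cos_sphericalAngle_mul_sin_mul_sin hu hw hv
  have hcos_w := cos_sphericalAngle_mul_sin_mul_sin hu hv hw
  have hsin_w := sq_sin_sphericalAngle_mul_sin_mul_sin hu hv hw
  have hsines := sin_sphericalAngle_mul_sin_mul_sin_comm hu hv hw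
  rw [angle_comm v u, angle_comm w u, angle_comm w v] at *
  refine mul_left_cancel₀
    (by positivity : sin (angle v w) ^ 2 * sin (angle u w) * sin (angle u v) ≠ 0) ?_
  linear_combination cos (angle v w) * hsin_w
    - cos (angle v w) * (sin (sphericalAngle u w v) * (sin (angle u w) * sin (angle v w))) * hsines
    - cos (sphericalAngle u w v) * (sin (angle u w) * sin (angle v w)) * hcos_v
    - (cos (angle u w) - cos (angle u v) * cos (angle v w)) * hcos_w
    - sin (angle v w) ^ 2 * hcos_u
    - (cos (angle v w) - cos (angle u v) * cos (angle u w)) * sin_sq_add_cos_sq (angle v w)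

end InnerProductGeometry

/-- Dual spherical law of cosines: for a spherical triangle given by linearly
independent unit vectors `A`, `B`, `C`,
`cos a * sin B * sin C = cos B * cos C + cos A`, where `a = ∠(B,C)` and the
vertex angles are the angles between the projected sides at each vertex. -/
theorem spherical_dual_law_of_cosines
    {E : Type*} [NormedAddCommGroup E] [InnerProductSpace ℝ E]
    (A B C : E) (hA : ‖A‖ = 1) (hB : ‖B‖ = 1) (hC : ‖C‖ = 1)
    (hli : LinearIndependent ℝ ![A, B, C]) :
    Real.cos (angle B C) *
      Real.sin (angle (A - (inner ℝ A B : ℝ) • B) (C - (inner ℝ C B : ℝ) • B)) *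
      Real.sin (angle (A - (inner ℝ A C : ℝ) • C) (B - (inner ℝ B C : ℝ) • C)) =
    Real.cos (angle (A - (inner ℝ A B : ℝ) • B) (C - (inner ℝ C B : ℝ) • B)) *
      Real.cos (angle (A - (inner ℝ A C : ℝ) • C) (B - (inner ℝ B C : ℝ) • C)) +
      Real.cos (angle (B - (inner ℝ B A : ℝ) • A) (C - (inner ℝ C A : ℝ) • A)) := by
  have hAB : LinearIndependent ℝ ![A, B] := hli.pair (i := 0) (j := 1) (by decide)
  have hAC : LinearIndependent ℝ ![A, C] := hli.pair (i := 0) (j := 2) (by decide)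
  have hBC : LinearIndependent ℝ ![B, C] := hli.pair (i := 1) (j := 2) (by decide)
  exact cos_angle_mul_sin_sphericalAngle_mul_sin_sphericalAngle hA hB hC
    (sin_angle_ne_zero_of_linearIndependent hAB) (sin_angle_ne_zero_of_linearIndependent hAC)
    (sin_angle_ne_zero_of_linearIndependent hBC)
end
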